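/- arXiv:1605.08563 — 4 statements merged into one kernel-verified Lean document; each statement's English description precedes it below -/
import Mathlib

section
/- Let td be a distance function satisfying the generalized triangle inequality, and suppose for each participant p there is an associated intruder e(p) with td(p, e(p)) = td(e(p), p) = 0 and td(e(p), e(q)) = td(p, q) for all participants p, q. Then for any participants p, p' and any reals t, t', if there exist reals t₁, t₂, t₃ with t₁ ≥ t + td(p, e(p)), t₂ ≥ t₁ + td(e(p), e(p')), t₃ ≥ t₂, and t' ≥ t₃ + td(e(p'), p'), then t' ≥ t + td(p, p'); conversely if t' ≥ t + td(p, p') then such t₁, t₂, t₃ exist. -/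
/-- Sum of travel times along the path `a, L..., a'`. -/
def pathSum {A : Type*} (td : A → A → ℝ) : A → List A → A → ℝ
  | a, [], a' => td a a'
  | a, b :: L, a' => td a b + pathSum td b L a'

/-- with co-located intruders `e p` (zero travel time to their
participant, and intruder-intruder distances mirroring participant distances),
relaying through `e p` and `e p'` is possible exactly when `t' ≥ t + td p p'`. -/
theorem stmt_2 {P I : Type*} (td : P ⊕ I → P ⊕ I → ℝ)
    (hGTI : ∀ (a a' : P ⊕ I) (L : List (P ⊕ I)), L ≠ [] → td a a' ≤ pathSum td a L a')
    (hrefl : ∀ a : P ⊕ I, td a a = 0)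
    (e : P → I)
    (hePto : ∀ p : P, td (Sum.inl p) (Sum.inr (e p)) = 0)
    (hePfrom : ∀ p : P, td (Sum.inr (e p)) (Sum.inl p) = 0)
    (heMirror : ∀ p q : P, td (Sum.inr (e p)) (Sum.inr (e q)) = td (Sum.inl p) (Sum.inl q))
    (p p' : P) (t t' : ℝ) :
    (∃ t₁ t₂ t₃ : ℝ,
        t₁ ≥ t + td (Sum.inl p) (Sum.inr (e p)) ∧
        t₂ ≥ t₁ + td (Sum.inr (e p)) (Sum.inr (e p')) ∧
        t₃ ≥ t₂ ∧
        t' ≥ t₃ + td (Sum.inr (e p')) (Sum.inl p')) ↔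
      t' ≥ t + td (Sum.inl p) (Sum.inl p') := by
  constructor
  · rintro ⟨t₁, t₂, t₃, h1, h2, h3, h4⟩
    rw [hePto] at h1
    rw [heMirror] at h2
    rw [hePfrom] at h4
    linarith
  · intro h
    refine ⟨t, t + td (Sum.inl p) (Sum.inl p'), t + td (Sum.inl p) (Sum.inl p'), ?_, ?_, le_refl _, ?_⟩
    · rw [hePto]; linarith
    · rw [heMirror]
    · rw [hePfrom]; linarith
end

section
/- Under the setup of co-located intruders (td(p, e(p)) = 0 and td(e(p), e(q)) = td(p,q)), for any message routed from participant p through an arbitrary chain of intruders i₁, …, i_j to participant p' with timestamps satisfying the hop constraints, the same send time t and receive time t' can be realized by the two-intruder route p → e(p) → e(p') → p': i.e., there exist intermediate timestamps making all hop constraints of the two-intruder route hold with the same endpoints t, t'. -/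
theorem add_pathSum_ofFn_le {A : Type*} (td : A → A → ℝ) {j : ℕ} (f : Fin (j + 1) → A)
    (s : Fin (j + 1) → ℝ) {a a' : A} {t t' : ℝ} (h0 : t + td a (f 0) ≤ s 0)
    (hstep : ∀ m : Fin j, s m.castSucc + td (f m.castSucc) (f m.succ) ≤ s m.succ)
    (hlast : s (Fin.last j) + td (f (Fin.last j)) a' ≤ t') :
    t + pathSum td a (List.ofFn f) a' ≤ t' := by
  induction j generalizing a t with
  | zero =>
    simp only [List.ofFn_succ, List.ofFn_zero, pathSum]
    change s 0 + td (f 0) a' ≤ t' at hlast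
    linarith
  | succ j ih =>
    have htail : s 0 + pathSum td (f 0) (List.ofFn fun m => f m.succ) a' ≤ t' :=
      ih (fun m => f m.succ) (fun m => s m.succ) (hstep 0) (fun m => hstep m.succ) hlast
    rw [List.ofFn_succ, pathSum]
    linarith

theorem stmt_3_general {P I : Type*} (td : P ⊕ I → P ⊕ I → ℝ)
    (hGTI : ∀ (a a' : P ⊕ I) (L : List (P ⊕ I)), L ≠ [] → td a a' ≤ pathSum td a L a')
    (e : P → I)
    (hePto : ∀ p : P, td (Sum.inl p) (Sum.inr (e p)) = 0)
    (hePfrom : ∀ p : P, td (Sum.inr (e p)) (Sum.inl p) = 0)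
    (heMirror : ∀ p q : P, td (Sum.inr (e p)) (Sum.inr (e q)) = td (Sum.inl p) (Sum.inl q))
    (p p' : P) (t t' : ℝ)
    (j : ℕ) (i : Fin (j + 1) → I) (s : Fin (j + 1) → ℝ)
    (h0 : s 0 ≥ t + td (Sum.inl p) (Sum.inr (i 0)))
    (hstep : ∀ m : Fin j,
      s m.succ ≥ s m.castSucc + td (Sum.inr (i m.castSucc)) (Sum.inr (i m.succ)))
    (hlast : t' ≥ s (Fin.last j) + td (Sum.inr (i (Fin.last j))) (Sum.inl p')) :
    ∃ u₁ u₂ : ℝ,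
      u₁ ≥ t + td (Sum.inl p) (Sum.inr (e p)) ∧
      u₂ ≥ u₁ + td (Sum.inr (e p)) (Sum.inr (e p')) ∧
      t' ≥ u₂ + td (Sum.inr (e p')) (Sum.inl p') := by
  have hroute := add_pathSum_ofFn_le td (fun m => Sum.inr (i m)) s h0 hstep hlast
  have hdirect := hGTI (Sum.inl p) (Sum.inl p') (List.ofFn fun m => Sum.inr (i m)) (by simp)
  refine ⟨t, t + td (Sum.inl p) (Sum.inl p'), ?_, ?_, ?_⟩
  · rw [hePto, add_zero]
  · rw [heMirror]
  · rw [hePfrom]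
    linarith

/-- any message route from `p` through a chain of intruders
`i₀, …, i_j` to `p'` with timestamps satisfying the hop constraints can be
replaced by the two-intruder route `p → e p → e p' → p'` with the same
endpoint times `t`, `t'`. -/
theorem stmt_3 {P I : Type*} (td : P ⊕ I → P ⊕ I → ℝ)
    (hGTI : ∀ (a a' : P ⊕ I) (L : List (P ⊕ I)), L ≠ [] → td a a' ≤ pathSum td a L a')
    (hrefl : ∀ a : P ⊕ I, td a a = 0)
    (e : P → I)
    (hePto : ∀ p : P, td (Sum.inl p) (Sum.inr (e p)) = 0)
    (hePfrom : ∀ p : P, td (Sum.inr (e p)) (Sum.inl p) = 0)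
    (heMirror : ∀ p q : P, td (Sum.inr (e p)) (Sum.inr (e q)) = td (Sum.inl p) (Sum.inl q))
    (p p' : P) (t t' : ℝ)
    (j : ℕ) (i : Fin (j + 1) → I) (s : Fin (j + 1) → ℝ)
    (h0 : s 0 ≥ t + td (Sum.inl p) (Sum.inr (i 0)))
    (hstep : ∀ m : Fin j,
      s m.succ ≥ s m.castSucc + td (Sum.inr (i m.castSucc)) (Sum.inr (i m.succ)))
    (hlast : t' ≥ s (Fin.last j) + td (Sum.inr (i (Fin.last j))) (Sum.inl p')) :
    ∃ u₁ u₂ : ℝ,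
      u₁ ≥ t + td (Sum.inl p) (Sum.inr (e p)) ∧
      u₂ ≥ u₁ + td (Sum.inr (e p)) (Sum.inr (e p')) ∧
      t' ≥ u₂ + td (Sum.inr (e p')) (Sum.inl p') :=
  stmt_3_general td hGTI e hePto hePfrom heMirror p p' t t' j i s h0 hstep hlast
end

section
/- Conversely, if td(p₁,i₁) + td(i₁,i₂) + td(i₂,p₂) + td(p₂,i₂) + td(i₂,i₁) + td(i₁,p₁) ≤ 4 and all the td values involved are nonnegative, then there exists an assignment of reals t₁,…,t₁₃ satisfying the mafia-fraud constraint set of Example 4 (listed in the context). -/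
/-- if the total relayed round-trip time is at most 4 and all
travel times are nonnegative, then the mafia-fraud constraint set of
Example 4 is satisfiable. -/
theorem stmt_9 {A : Type*} (td : A → A → ℝ)
    (hnonneg : ∀ a b : A, 0 ≤ td a b)
    (p₁ p₂ i₁ i₂ : A)
    (hbound : td p₁ i₁ + td i₁ i₂ + td i₂ p₂ + td p₂ i₂ + td i₂ i₁ + td i₁ p₁ ≤ 4) :
    ∃ t₁ t₂ t₃ t₄ t₅ t₆ t₇ t₈ t₉ t₁₀ t₁₁ t₁₂ t₁₃ : ℝ,
      t₂ ≥ t₁ ∧ t₆ ≥ t₂ + td p₁ i₁ ∧ t₇ ≥ t₆ ∧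
      t₈ ≥ t₇ + td i₁ i₂ ∧ t₉ ≥ t₈ ∧ t₄ ≥ t₉ + td i₂ p₂ ∧
      t₅ ≥ t₄ ∧ t₁₀ ≥ t₅ + td p₂ i₂ ∧ t₁₁ ≥ t₁₀ ∧
      t₁₂ ≥ t₁₁ + td i₂ i₁ ∧ t₁₃ ≥ t₁₂ ∧ t₃ ≥ t₁₃ + td i₁ p₁ ∧
      t₃ ≤ t₂ + 4 := by
  set a := td p₁ i₁; set b := td i₁ i₂; set c := td i₂ p₂
  set d := td p₂ i₂; set e := td i₂ i₁; set f := td i₁ p₁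
  refine ⟨0, 0, a+b+c+d+e+f, a+b+c, a+b+c, a, a, a+b, a+b, a+b+c+d,
    a+b+c+d, a+b+c+d+e, a+b+c+d+e, ?_⟩
  refine ⟨le_refl _, by linarith, le_refl _, by linarith, le_refl _, by linarith,
    le_refl _, by linarith, le_refl _, by linarith, le_refl _, by linarith, by linarith⟩
end

section
/- Attack-in-between-ticks: there exist nonnegative reals d = td(p₁,p₂) = td(p₂,p₁) with d > 2 such that the constraint set { t₂ ≥ t₁, t = t₂, t₄ ≥ t₂ + d, t₅ ≥ t₄, t₃ ≥ t₅ + d, t₃ ≤ ⌊t⌋ + 1 + 4, t₁ = ⌊t₁⌋ } is satisfiable. In particular, a round-trip distance exceeding the bound 4 can be consistent with the verifier's clock-granularity measurement. -/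
/-- Attack-in-between-ticks: there is a one-way travel time
`d > 2` (round trip exceeding the bound 4) for which the verifier's
clock-granularity constraint set is still satisfiable. -/
theorem stmt_11 :
    ∃ d : ℝ, 0 ≤ d ∧ d > 2 ∧
      ∃ t t₁ t₂ t₃ t₄ t₅ : ℝ,
        t₂ ≥ t₁ ∧ t = t₂ ∧ t₄ ≥ t₂ + d ∧ t₅ ≥ t₄ ∧ t₃ ≥ t₅ + d ∧
        t₃ ≤ (⌊t⌋ : ℝ) + 1 + 4 ∧ t₁ = (⌊t₁⌋ : ℝ) := by
  refine ⟨2.4, by norm_num, by norm_num,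
    0.1, 0, 0.1, 4.9, 2.5, 2.5, by norm_num, rfl, by norm_num, le_refl _, by norm_num, ?_, ?_⟩
  · have : ⌊(0.1 : ℝ)⌋ = 0 := by
      apply Int.floor_eq_iff.mpr <;> norm_num
    rw [this]; norm_num
  · simp
end
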